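/- For every integer κ ≥ 2, the strict inequality √(2κ(κ+1)) + (3/2)(κ+1) > (κ+1)·(1 + 1/κ)^κ + 1 holds. -/

import Mathlib

/-!
Since `√2 > 140/99` and `κ (κ + 1) ≥ (κ + 2/5)²`, the left-hand side is at least
`140/99 (κ + 2/5) + 3/2 (κ + 1)`, whose slope `≈ 2.914` exceeds `e`. As `(1 + 1/κ)^κ ≤ e`, this
linear bound beats the right-hand side once `κ ≥ 9`; the cases `2 ≤ κ ≤ 8` are checked exactly.
-/

open Real

lemma le_sqrt_two_mul_mul_add_one {x : ℝ} (hx : 1 ≤ x) :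
    140 / 99 * (x + 2 / 5) ≤ √(2 * x * (x + 1)) :=
  Real.le_sqrt_of_sq_le (by nlinarith)

lemma add_one_mul_one_add_one_div_pow_add_one_lt (κ : ℕ) (hκ : 2 ≤ κ) :
    ((κ : ℝ) + 1) * (1 + 1 / κ) ^ κ + 1 < 140 / 99 * ((κ : ℝ) + 2 / 5) + 3 / 2 * ((κ : ℝ) + 1) := by
  rcases le_or_gt κ 8 with hsmall | hlarge
  · interval_cases κ <;> norm_num
  · have hκ9 : (9 : ℝ) ≤ κ := by exact_mod_cast hlarge
    have hpow : (1 + 1 / (κ : ℝ)) ^ κ < 2.7182818286 := by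
      rw [one_div]
      exact one_add_inv_pow_le_exp.trans_lt exp_one_lt_d9
    nlinarith

theorem linear_worse_than_exponential (κ : ℕ) (hκ : 2 ≤ κ) :
    Real.sqrt (2 * κ * (κ + 1)) + 3 / 2 * ((κ : ℝ) + 1) >
      ((κ : ℝ) + 1) * (1 + 1 / κ) ^ κ + 1 := by
  have hκ1 : (1 : ℝ) ≤ κ := by exact_mod_cast one_le_two.trans hκ
  linarith [le_sqrt_two_mul_mul_add_one hκ1, add_one_mul_one_add_one_div_pow_add_one_lt κ hκ]
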